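/- For μ ∈ [0, 1/2], p ∈ [0,1], and every integer k ≥ 2, D(k,μ,p) := (1-(1-μp)^k)/(2k) + p/2 - (1-μ)p(1-μp)^{k-1}/2 - μp is nonnegative. -/
import Mathlib

/-- Key bound: `(m+1)(1-x) x^m ≤ 1 - x^(m+1)` for `x ∈ [0,1]`. -/
lemma key_pow_bound (x : ℝ) (hx0 : 0 ≤ x) (hx1 : x ≤ 1) :
    ∀ m : ℕ, ((m : ℝ) + 1) * (1 - x) * x ^ m ≤ 1 - x ^ (m + 1) := by
  intro m
  induction m with
  | zero => simp
  | succ n ih =>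
    have hpow : x ^ (n + 1) ≤ 1 := pow_le_one₀ hx0 hx1
    have hxn : 0 ≤ x ^ n := pow_nonneg hx0 n
    push_cast
    calc ((n : ℝ) + 1 + 1) * (1 - x) * x ^ (n + 1)
        = x * (((n : ℝ) + 1) * (1 - x) * x ^ n) + (1 - x) * x ^ (n + 1) := by
          ring
      _ ≤ x * (1 - x ^ (n + 1)) + (1 - x) * 1 := by
          have h1 : x * (((n : ℝ) + 1) * (1 - x) * x ^ n) ≤ x * (1 - x ^ (n + 1)) :=
            mul_le_mul_of_nonneg_left (ih) hx0
          have h2 : (1 - x) * x ^ (n + 1) ≤ (1 - x) * 1 :=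
            mul_le_mul_of_nonneg_left hpow (by linarith)
          linarith
      _ = 1 - x ^ (n + 1 + 1) := by ring

/-- For `μ ≤ 1/2` the normalized difference `D(k,μ,p)` is nonnegative. -/
theorem D_nonneg (μ p : ℝ) (hμ0 : 0 ≤ μ) (hμ1 : μ ≤ 1 / 2)
    (hp0 : 0 ≤ p) (hp1 : p ≤ 1) (k : ℕ) (hk : 2 ≤ k) :
    0 ≤ (1 - (1 - μ * p) ^ k) / (2 * k) + p / 2
      - (1 - μ) * p * (1 - μ * p) ^ (k - 1) / 2 - μ * p := by
  obtain ⟨m, rfl⟩ : ∃ m, k = m + 1 := ⟨k - 1, by omega⟩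
  set q : ℝ := μ * p with hq
  set x : ℝ := 1 - q with hxdef
  have hq0 : 0 ≤ q := mul_nonneg hμ0 hp0
  have hq2 : 2 * q ≤ p := by
    have := mul_le_mul_of_nonneg_right hμ1 hp0
    simp only [hq]; nlinarith
  have hq1 : q ≤ 1 := by nlinarith
  have hx0 : 0 ≤ x := by simp [hxdef]; linarith
  have hx1 : x ≤ 1 := by simp [hxdef]; linarith
  have hkey := key_pow_bound x hx0 hx1 m
  have hk1 : (1:ℝ) ≤ (m:ℝ) + 1 := by linarith [Nat.cast_nonneg (α := ℝ) m]
  have hden : (0:ℝ) < 2 * ((m:ℕ) + 1 : ℕ) := by positivity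
  have hxm1 : x ^ m ≤ 1 := pow_le_one₀ hx0 hx1
  have hxm0 : 0 ≤ x ^ m := pow_nonneg hx0 m
  -- step 1: (1 - x^(m+1)) / (2(m+1)) ≥ q * x^m / 2
  have h1 : q * x ^ m / 2 ≤ (1 - x ^ (m + 1)) / (2 * ((m:ℕ) + 1 : ℕ)) := by
    rw [div_le_div_iff₀ (by norm_num) hden]
    push_cast
    have hx : (1 - x) = q := by rw [hxdef]; ring
    rw [hx] at hkey
    nlinarith [hkey]
  have heq : (1 - μ) * p = p - q := by rw [hq]; ring
  calc (0:ℝ) ≤ q * x ^ m / 2 + p / 2 - (p - q) * x ^ m / 2 - q := by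
        nlinarith [mul_nonneg (by linarith : (0:ℝ) ≤ p - 2*q) (by linarith : (0:ℝ) ≤ 1 - x ^ m)]
    _ ≤ (1 - x ^ (m + 1)) / (2 * ((m:ℕ) + 1 : ℕ)) + p / 2 - (p - q) * x ^ m / 2 - q := by
        linarith
    _ = (1 - x ^ (m + 1)) / (2 * ((m:ℕ)+1:ℕ)) + p / 2
        - (1 - μ) * p * x ^ (m + 1 - 1) / 2 - q := by
        rw [heq]; norm_num
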